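/- arXiv:1905.11436 — 4 statements merged into one kernel-verified Lean document; each statement's English description precedes it below -/
import Mathlib

section
/- Let P̄ ∈ ℝ^{k×k}, R ∈ ℝ^{d×d} be positive definite, H ∈ ℝ^{d×k}, and let x̄ ∈ ℝ^k, z ∈ ℝ^d. Let H̃ ∈ ℝ^{(d+k)×k} be the rowwise concatenation of H and the identity I_k, let z̃ = (z, x̄) ∈ ℝ^{d+k}, and let R̃ be the block diagonal matrix with blocks R and P̄. Then (H̃ᵀ R̃^{-1} H̃)^{-1} H̃ᵀ R̃^{-1} z̃ = x̄ + K (z − H x̄), where K = P̄ Hᵀ (H P̄ Hᵀ + R)^{-1}. -/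
/-!
Write `G = H̃ᵀ R̃⁻¹ = [Hᵀ R⁻¹ | P̄⁻¹]`, so that `G H̃ = Hᵀ R⁻¹ H + P̄⁻¹ =: A` and
`G z̃ = Hᵀ R⁻¹ z + P̄⁻¹ x̄`. Since `A` is invertible it suffices to check
`A (x̄ + K (z - H x̄)) = G z̃`, and this reduces to the push-through identity
`(Hᵀ R⁻¹ H + P̄⁻¹) P̄ Hᵀ = Hᵀ R⁻¹ (H P̄ Hᵀ + R)`, i.e. `A K = Hᵀ R⁻¹`.
-/

open Matrix

namespace Matrix

section CommRing

variable {m n α : Type*} [Fintype m] [Fintype n] [DecidableEq m] [DecidableEq n] [CommRing α]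

theorem inv_fromBlocks_zero_zero {A : Matrix m m α} {D : Matrix n n α}
    (hAD : IsUnit A ↔ IsUnit D) : (fromBlocks A 0 0 D)⁻¹ = fromBlocks A⁻¹ 0 0 D⁻¹ := by
  simpa using inv_fromBlocks_zero₁₂_of_isUnit_iff A 0 D hAD

theorem transpose_fromRows_one_mul_inv_fromBlocks (H : Matrix m n α) {R : Matrix m m α}
    {P : Matrix n n α} (hRP : IsUnit R ↔ IsUnit P) :
    (fromRows H (1 : Matrix n n α))ᵀ * (fromBlocks R 0 0 P)⁻¹ = fromCols (Hᵀ * R⁻¹) P⁻¹ := by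
  rw [inv_fromBlocks_zero_zero hRP, transpose_fromRows, transpose_one, fromCols_mul_fromBlocks]
  simp

theorem information_mul_gain (B : Matrix n m α) (H : Matrix m n α) {P : Matrix n n α}
    {R : Matrix m m α} (hP : IsUnit P.det) (hR : IsUnit R.det)
    (hS : IsUnit (H * P * B + R).det) :
    (B * R⁻¹ * H + P⁻¹) * (P * B * (H * P * B + R)⁻¹) = B * R⁻¹ := by
  have push : (B * R⁻¹ * H + P⁻¹) * (P * B) = B * R⁻¹ * (H * P * B + R) := by
    rw [Matrix.add_mul, Matrix.mul_add, ← Matrix.mul_assoc P⁻¹, nonsing_inv_mul _ hP,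
      Matrix.one_mul, nonsing_inv_mul_cancel_right _ _ hR]
    simp only [Matrix.mul_assoc]
  rw [← Matrix.mul_assoc, push, mul_nonsing_inv_cancel_right _ _ hS]

end CommRing

theorem PosSemidef.mul_mul_transpose_add {m n : Type*} [Fintype m] [Fintype n]
    {A : Matrix n n ℝ} {B : Matrix m m ℝ} (hA : A.PosSemidef) (hB : B.PosDef)
    (M : Matrix m n ℝ) : (M * A * Mᵀ + B).PosDef := by
  simpa using PosDef.posSemidef_add (hA.mul_mul_conjTranspose_same M) hB

end Matrix

theorem stmt3 {k d : ℕ} (P : Matrix (Fin k) (Fin k) ℝ) (R : Matrix (Fin d) (Fin d) ℝ)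
    (hP : P.PosDef) (hR : R.PosDef) (H : Matrix (Fin d) (Fin k) ℝ)
    (xbar : Fin k → ℝ) (z : Fin d → ℝ)
    (Htil : Matrix (Fin d ⊕ Fin k) (Fin k) ℝ) (hHtil : Htil = fromRows H 1)
    (ztil : Fin d ⊕ Fin k → ℝ) (hztil : ztil = Sum.elim z xbar)
    (Rtil : Matrix (Fin d ⊕ Fin k) (Fin d ⊕ Fin k) ℝ)
    (hRtil : Rtil = fromBlocks R 0 0 P)
    (K : Matrix (Fin k) (Fin d) ℝ) (hK : K = P * Hᵀ * (H * P * Hᵀ + R)⁻¹) :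
    ((Htilᵀ * Rtil⁻¹ * Htil)⁻¹ * Htilᵀ * Rtil⁻¹) *ᵥ ztil
      = xbar + K *ᵥ (z - H *ᵥ xbar) := by
  subst hHtil hztil hRtil hK
  have hS : (H * P * Hᵀ + R).PosDef := hP.posSemidef.mul_mul_transpose_add hR H
  have hA : (Hᵀ * R⁻¹ * H + P⁻¹).PosDef := by
    simpa using hR.inv.posSemidef.mul_mul_transpose_add hP.inv Hᵀ
  have hAK := information_mul_gain Hᵀ H (P.isUnit_iff_isUnit_det.mp hP.isUnit)
    (R.isUnit_iff_isUnit_det.mp hR.isUnit) (isUnit_iff_isUnit_det _ |>.mp hS.isUnit)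
  let := hA.isUnit.invertible
  rw [Matrix.mul_assoc, ← mulVec_mulVec,
    transpose_fromRows_one_mul_inv_fromBlocks H (iff_of_true hR.isUnit hP.isUnit),
    fromCols_mul_fromRows, Matrix.mul_one]
  apply inv_mulVec_eq_vec
  rw [fromCols_mulVec_sumElim, mulVec_add, mulVec_mulVec, hAK, mulVec_sub, add_mulVec,
    mulVec_mulVec xbar (Hᵀ * R⁻¹) H]
  abel
end

section
/- Let X ∈ ℝ^{t×k}, Z ∈ ℝ^{t×d}, H ∈ ℝ^{d×k}. Define R̂ = (1/t)(Z − X Hᵀ)ᵀ(Z − X Hᵀ), and assume R̂ and Hᵀ R̂^{-1} H are invertible. For each j ∈ {1,…,k}, the j-th column of R̂^{-1} H (Hᵀ R̂^{-1} H)^{-1} is the unique solution b_j of the constrained least squares problem: minimize ‖X e_j − Z b_j‖₂² subject to Hᵀ b_j = e_j, where X e_j denotes the j-th column of X and e_j ∈ ℝ^k is the j-th standard basis vector. -/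
/-!
Write `M = Z - X Hᵀ`, so that `Mᵀ M = t R̂`. On the affine subspace `Hᵀ b = e_j` the residual
`X e_j - Z b` equals `-M b`, so the problem is to minimise `‖M b‖²` subject to `Hᵀ b = e_j`.
The candidate `b₀ = R̂⁻¹ H (Hᵀ R̂⁻¹ H)⁻¹ e_j` is feasible and satisfies the Lagrange condition
`Mᵀ M b₀ = H μ` with `μ = t (Hᵀ R̂⁻¹ H)⁻¹ e_j`; hence `M b₀` is orthogonal to `M w` for every `w`
with `Hᵀ w = 0`, and Pythagoras gives `‖M b‖² = ‖M b₀‖² + ‖M (b - b₀)‖²`. Since `Mᵀ M = t R̂` is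
invertible, `M` is injective, which yields uniqueness.
-/

open Matrix

section LagrangeCondition

variable {m n p R : Type*} [Fintype m] [Fintype n] [Fintype p] [CommRing R]
  {M : Matrix m n R} {A : Matrix p n R} {b₀ b : n → R} {μ : p → R}

theorem mulVec_dotProduct_mulVec_eq_zero_of_lagrange (hμ : (Mᵀ * M) *ᵥ b₀ = Aᵀ *ᵥ μ)
    {w : n → R} (hw : A *ᵥ w = 0) : M *ᵥ b₀ ⬝ᵥ M *ᵥ w = 0 :=
  calc M *ᵥ b₀ ⬝ᵥ M *ᵥ w = (Mᵀ * M) *ᵥ b₀ ⬝ᵥ w := by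
        rw [dotProduct_mulVec, ← mulVec_transpose, mulVec_mulVec]
    _ = μ ⬝ᵥ A *ᵥ w := by rw [hμ, mulVec_transpose, dotProduct_mulVec]
    _ = 0 := by rw [hw, dotProduct_zero]

theorem mulVec_dotProduct_self_eq_add_of_lagrange (hμ : (Mᵀ * M) *ᵥ b₀ = Aᵀ *ᵥ μ)
    (hb : A *ᵥ b = A *ᵥ b₀) :
    M *ᵥ b ⬝ᵥ M *ᵥ b = M *ᵥ b₀ ⬝ᵥ M *ᵥ b₀ + M *ᵥ (b - b₀) ⬝ᵥ M *ᵥ (b - b₀) := by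
  have hcross := mulVec_dotProduct_mulVec_eq_zero_of_lagrange hμ
    (show A *ᵥ (b - b₀) = 0 by rw [mulVec_sub, hb, sub_self])
  have hsplit : M *ᵥ b = M *ᵥ b₀ + M *ᵥ (b - b₀) := by rw [← mulVec_add, add_sub_cancel]
  rw [hsplit, add_dotProduct, dotProduct_add, dotProduct_add, dotProduct_comm (M *ᵥ (b - b₀)),
    hcross, add_zero, zero_add]

variable [LinearOrder R] [IsStrictOrderedRing R]

theorem dotProduct_self_nonneg (v : n → R) : 0 ≤ v ⬝ᵥ v :=
  Finset.sum_nonneg fun i _ => mul_self_nonneg (v i)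

theorem mulVec_dotProduct_self_le_of_lagrange (hμ : (Mᵀ * M) *ᵥ b₀ = Aᵀ *ᵥ μ)
    (hb : A *ᵥ b = A *ᵥ b₀) : M *ᵥ b₀ ⬝ᵥ M *ᵥ b₀ ≤ M *ᵥ b ⬝ᵥ M *ᵥ b := by
  rw [mulVec_dotProduct_self_eq_add_of_lagrange hμ hb]
  exact le_add_of_nonneg_right (dotProduct_self_nonneg _)

theorem eq_of_mulVec_dotProduct_self_le_of_lagrange (hM : Function.Injective M.mulVec)
    (hμ : (Mᵀ * M) *ᵥ b₀ = Aᵀ *ᵥ μ) (hb : A *ᵥ b = A *ᵥ b₀)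
    (hle : M *ᵥ b ⬝ᵥ M *ᵥ b ≤ M *ᵥ b₀ ⬝ᵥ M *ᵥ b₀) : b = b₀ := by
  rw [mulVec_dotProduct_self_eq_add_of_lagrange hμ hb] at hle
  have hzero : M *ᵥ (b - b₀) = 0 :=
    dotProduct_self_eq_zero.mp (le_antisymm (by linarith) (dotProduct_self_nonneg _))
  rw [mulVec_sub, sub_eq_zero] at hzero
  exact hM hzero

end LagrangeCondition

section Fusion

variable {d k K : Type*} [Fintype d] [Fintype k] [DecidableEq d] [DecidableEq k] [Field K]

noncomputable def fusionGain (R : Matrix d d K) (H : Matrix d k K) : Matrix d k K :=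
  R⁻¹ * H * (Hᵀ * R⁻¹ * H)⁻¹

variable {R : Matrix d d K} {H : Matrix d k K}

theorem transpose_mul_fusionGain (hG : IsUnit (Hᵀ * R⁻¹ * H).det) :
    Hᵀ * fusionGain R H = 1 := by
  rw [fusionGain, ← Matrix.mul_assoc, ← Matrix.mul_assoc, mul_nonsing_inv _ hG]

theorem mul_fusionGain (hR : IsUnit R.det) :
    R * fusionGain R H = H * (Hᵀ * R⁻¹ * H)⁻¹ := by
  rw [fusionGain, ← Matrix.mul_assoc, ← Matrix.mul_assoc, mul_nonsing_inv _ hR, Matrix.one_mul]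

theorem ne_zero_of_isUnit_det_transpose_mul_inv_mul [Nonempty k]
    (hG : IsUnit (Hᵀ * R⁻¹ * H).det) : R ≠ 0 := by
  rintro rfl
  simp at hG

end Fusion

theorem mulVec_injective_of_isUnit_transpose_mul_self {m n K : Type*} [Fintype m] [Fintype n]
    [DecidableEq n] [Field K] {M : Matrix m n K} (h : IsUnit (Mᵀ * M)) :
    Function.Injective M.mulVec := by
  refine Function.Injective.of_comp (f := Mᵀ.mulVec) ?_
  convert mulVec_injective_iff_isUnit.mpr h using 1
  funext v
  exact mulVec_mulVec v Mᵀ M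

theorem sum_sq_col_sub_mulVec_eq {t d k R : Type*} [Fintype t] [Fintype d] [Fintype k]
    [DecidableEq k] [CommRing R] (X : Matrix t k R) (Z : Matrix t d R) (H : Matrix d k R)
    {j : k} {b : d → R} (hb : Hᵀ *ᵥ b = Pi.single j 1) :
    ∑ i, (X i j - (Z *ᵥ b) i) ^ 2 = (Z - X * Hᵀ) *ᵥ b ⬝ᵥ (Z - X * Hᵀ) *ᵥ b := by
  have hres : X *ᵥ Pi.single j 1 - Z *ᵥ b = -((Z - X * Hᵀ) *ᵥ b) := by
    rw [sub_mulVec, ← mulVec_mulVec, hb, neg_sub]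
  rw [← neg_dotProduct_neg, ← hres, mulVec_single_one]
  simp only [dotProduct, sq, Pi.sub_apply, col_apply]

theorem stmt5 {t k d : ℕ} (X : Matrix (Fin t) (Fin k) ℝ) (Z : Matrix (Fin t) (Fin d) ℝ)
    (H : Matrix (Fin d) (Fin k) ℝ)
    (Rhat : Matrix (Fin d) (Fin d) ℝ)
    (hRhat : Rhat = (1 / (t : ℝ)) • ((Z - X * Hᵀ)ᵀ * (Z - X * Hᵀ)))
    (hRinv : IsUnit Rhat.det) (hHRH : IsUnit (Hᵀ * Rhat⁻¹ * H).det)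
    (j : Fin k) (b₀ : Fin d → ℝ)
    (hb₀ : b₀ = fun i => (Rhat⁻¹ * H * (Hᵀ * Rhat⁻¹ * H)⁻¹) i j) :
    (Hᵀ *ᵥ b₀ = Pi.single j 1) ∧
    (∀ b : Fin d → ℝ, Hᵀ *ᵥ b = Pi.single j 1 →
      ∑ i, (X i j - (Z *ᵥ b₀) i) ^ 2 ≤ ∑ i, (X i j - (Z *ᵥ b) i) ^ 2) ∧
    (∀ b : Fin d → ℝ, Hᵀ *ᵥ b = Pi.single j 1 →
      (∀ b' : Fin d → ℝ, Hᵀ *ᵥ b' = Pi.single j 1 →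
        ∑ i, (X i j - (Z *ᵥ b) i) ^ 2 ≤ ∑ i, (X i j - (Z *ᵥ b') i) ^ 2) →
      b = b₀) := by
  set M := Z - X * Hᵀ
  -- For `t = 0` the junk value `1 / 0 = 0` gives `R̂ = 0`, making `Hᵀ R̂⁻¹ H = 0` singular.
  have ht : (t : ℝ) ≠ 0 := by
    intro ht
    have : Nonempty (Fin k) := ⟨j⟩
    exact ne_zero_of_isUnit_det_transpose_mul_inv_mul hHRH (by simp [hRhat, ht])
  have hMM : Mᵀ * M = (t : ℝ) • Rhat := by
    rw [hRhat, smul_smul, mul_one_div_cancel ht, one_smul]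
  have hb₀' : b₀ = fusionGain Rhat H *ᵥ Pi.single j 1 := by
    rw [hb₀, mulVec_single_one]; rfl
  have hfeas : Hᵀ *ᵥ b₀ = Pi.single j 1 := by
    rw [hb₀', mulVec_mulVec, transpose_mul_fusionGain hHRH, one_mulVec]
  have hμ : (Mᵀ * M) *ᵥ b₀ = Hᵀᵀ *ᵥ ((t : ℝ) • (Hᵀ * Rhat⁻¹ * H)⁻¹ *ᵥ Pi.single j 1) := by
    rw [hMM, hb₀', mulVec_mulVec, Matrix.smul_mul, mul_fusionGain hRinv, transpose_transpose,
      Matrix.smul_mulVec, mulVec_smul, mulVec_mulVec]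
  have hM : Function.Injective M.mulVec := mulVec_injective_of_isUnit_transpose_mul_self <| by
    rw [hMM, isUnit_iff_isUnit_det, det_smul]
    exact (isUnit_iff_ne_zero.mpr (pow_ne_zero _ ht)).mul hRinv
  refine ⟨hfeas, fun b hb => ?_, fun b hb hmin => ?_⟩
  · rw [sum_sq_col_sub_mulVec_eq X Z H hb, sum_sq_col_sub_mulVec_eq X Z H hfeas]
    exact mulVec_dotProduct_self_le_of_lagrange hμ (hb.trans hfeas.symm)
  · have hle := hmin b₀ hfeas
    rw [sum_sq_col_sub_mulVec_eq X Z H hb, sum_sq_col_sub_mulVec_eq X Z H hfeas] at hle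
    exact eq_of_mulVec_dotProduct_self_le_of_lagrange hM hμ (hb.trans hfeas.symm) hle
end

section
/- Let X ∈ ℝ^{t×k}, Z ∈ ℝ^{t×d}, H ∈ ℝ^{d×k}, and R̂ = (1/t)(Z − X Hᵀ)ᵀ(Z − X Hᵀ) with Zᵀ Z invertible. If b ∈ ℝ^d satisfies Hᵀ b = e_j and b = (Zᵀ Z)^{-1}(Zᵀ X_j − H u) for some u ∈ ℝ^k (X_j the j-th column of X), then R̂ b = H β for β = (Xᵀ X_j − u − Xᵀ Z b)/t ∈ ℝ^k. In particular, if R̂ is invertible, b lies in the column space of R̂^{-1} H. -/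
open Matrix

theorem stmt7 {t k d : ℕ} (X : Matrix (Fin t) (Fin k) ℝ) (Z : Matrix (Fin t) (Fin d) ℝ)
    (H : Matrix (Fin d) (Fin k) ℝ)
    (Rhat : Matrix (Fin d) (Fin d) ℝ)
    (hRhat : Rhat = (1 / (t : ℝ)) • ((Z - X * Hᵀ)ᵀ * (Z - X * Hᵀ)))
    (hZZ : IsUnit (Zᵀ * Z).det)
    (j : Fin k) (b : Fin d → ℝ) (u : Fin k → ℝ)
    (hcon : Hᵀ *ᵥ b = Pi.single j 1)
    (hstat : b = (Zᵀ * Z)⁻¹ *ᵥ (Zᵀ *ᵥ (fun i => X i j) - H *ᵥ u)) :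
    (Rhat *ᵥ b = H *ᵥ ((1 / (t : ℝ)) •
        (Xᵀ *ᵥ (fun i => X i j) - u - (Xᵀ * Z) *ᵥ b))) ∧
    (IsUnit Rhat.det → ∃ β : Fin k → ℝ, b = (Rhat⁻¹ * H) *ᵥ β) := by
  have hZZb : (Zᵀ * Z) *ᵥ b = Zᵀ *ᵥ (fun i => X i j) - H *ᵥ u := by
    rw [hstat, mulVec_mulVec, Matrix.mul_nonsing_inv _ hZZ, one_mulVec]
  have hZXs : (Zᵀ * X) *ᵥ (Pi.single j 1) = Zᵀ *ᵥ (fun i => X i j) := by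
    rw [← mulVec_mulVec]
    funext i
    simp [mulVec, dotProduct, Pi.single_apply, mul_ite]
  have hXXs : (Xᵀ * X) *ᵥ (Pi.single j 1) = Xᵀ *ᵥ (fun i => X i j) := by
    rw [← mulVec_mulVec]
    funext i
    simp [mulVec, dotProduct, Pi.single_apply, mul_ite]
  have expand : ((Z - X * Hᵀ)ᵀ * (Z - X * Hᵀ)) *ᵥ b
      = (Zᵀ * Z) *ᵥ b - (Zᵀ * X) *ᵥ (Hᵀ *ᵥ b) - H *ᵥ ((Xᵀ * Z) *ᵥ b)
        + H *ᵥ ((Xᵀ * X) *ᵥ (Hᵀ *ᵥ b)) := by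
    simp only [transpose_sub, transpose_mul, transpose_transpose, Matrix.sub_mul,
      Matrix.mul_sub, sub_mulVec, mulVec_mulVec, Matrix.mul_assoc]
    abel
  have key : Rhat *ᵥ b = (1 / (t : ℝ)) •
      (H *ᵥ (Xᵀ *ᵥ (fun i => X i j) - u - (Xᵀ * Z) *ᵥ b)) := by
    rw [hRhat, smul_mulVec, expand, hcon, hZXs, hXXs, hZZb]
    rw [mulVec_sub, mulVec_sub]
    abel
  have h1 : Rhat *ᵥ b = H *ᵥ ((1 / (t : ℝ)) •
      (Xᵀ *ᵥ (fun i => X i j) - u - (Xᵀ * Z) *ᵥ b)) := by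
    rw [key, mulVec_smul]
  refine ⟨h1, fun hR => ⟨(1 / (t : ℝ)) • (Xᵀ *ᵥ (fun i => X i j) - u - (Xᵀ * Z) *ᵥ b), ?_⟩⟩
  rw [← mulVec_mulVec, ← h1, mulVec_mulVec, Matrix.nonsing_inv_mul _ hR, one_mulVec]
end

section
/- Let X ∈ ℝ^{t×k}, Z ∈ ℝ^{t×d}, H ∈ ℝ^{d×k}, α ∈ (0,1], and define R̂ = (α/t)(Z − X Hᵀ)ᵀ(Z − X Hᵀ) + (1−α) I_d. Assume Hᵀ R̂^{-1} H is invertible. Then for each j, the j-th column of R̂^{-1} H (Hᵀ R̂^{-1} H)^{-1} is the unique solution of: minimize (1/t) Σ_{i=1}^t (x_{ij} − b_jᵀ z_i)² + ((1−α)/α) ‖b_j‖₂² subject to Hᵀ b_j = e_j. -/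
open Matrix

theorem stmt11 {t k d : ℕ} (X : Matrix (Fin t) (Fin k) ℝ) (Z : Matrix (Fin t) (Fin d) ℝ)
    (H : Matrix (Fin d) (Fin k) ℝ) (α : ℝ) (hα : α ∈ Set.Ioc (0 : ℝ) 1)
    (Rhat : Matrix (Fin d) (Fin d) ℝ)
    (hRhat : Rhat = (α / (t : ℝ)) • ((Z - X * Hᵀ)ᵀ * (Z - X * Hᵀ)) + (1 - α) • 1)
    (hHRH : IsUnit (Hᵀ * Rhat⁻¹ * H).det)
    (j : Fin k) (b₀ : Fin d → ℝ)
    (hb₀ : b₀ = fun i => (Rhat⁻¹ * H * (Hᵀ * Rhat⁻¹ * H)⁻¹) i j) :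
    (Hᵀ *ᵥ b₀ = Pi.single j 1) ∧
    (∀ b : Fin d → ℝ, Hᵀ *ᵥ b = Pi.single j 1 →
      (1 / (t : ℝ)) * ∑ i, (X i j - (Z *ᵥ b₀) i) ^ 2 + ((1 - α) / α) * ∑ l, (b₀ l) ^ 2
        ≤ (1 / (t : ℝ)) * ∑ i, (X i j - (Z *ᵥ b) i) ^ 2 + ((1 - α) / α) * ∑ l, (b l) ^ 2) ∧
    (∀ b : Fin d → ℝ, Hᵀ *ᵥ b = Pi.single j 1 →
      (∀ b' : Fin d → ℝ, Hᵀ *ᵥ b' = Pi.single j 1 →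
        (1 / (t : ℝ)) * ∑ i, (X i j - (Z *ᵥ b) i) ^ 2 + ((1 - α) / α) * ∑ l, (b l) ^ 2
          ≤ (1 / (t : ℝ)) * ∑ i, (X i j - (Z *ᵥ b') i) ^ 2 + ((1 - α) / α) * ∑ l, (b' l) ^ 2) →
      b = b₀) := by
  obtain ⟨hα0, hα1⟩ := hα
  set E : Matrix (Fin t) (Fin d) ℝ := Z - X * Hᵀ with hE
  -- quadratic form identity
  have quad : ∀ w : Fin d → ℝ,
      w ⬝ᵥ (Rhat *ᵥ w) = (α / t) * ∑ i, ((E *ᵥ w) i) ^ 2 + (1 - α) * ∑ l, (w l) ^ 2 := by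
    intro w
    have h1 : w ⬝ᵥ ((Eᵀ * E) *ᵥ w) = ∑ i, ((E *ᵥ w) i) ^ 2 := by
      rw [← Matrix.mulVec_mulVec, Matrix.dotProduct_mulVec, Matrix.vecMul_transpose]
      simp [dotProduct, sq]
    have h2 : w ⬝ᵥ w = ∑ l, (w l) ^ 2 := by simp [dotProduct, sq]
    rw [hRhat, Matrix.add_mulVec, Matrix.smul_mulVec, Matrix.smul_mulVec,
      Matrix.one_mulVec, dotProduct_add, dotProduct_smul,
      dotProduct_smul, h1, h2, smul_eq_mul, smul_eq_mul]
  haveI : Nonempty (Fin k) := ⟨j⟩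
  have hRdet : IsUnit Rhat.det := by
    by_contra h
    rw [Matrix.nonsing_inv_apply_not_isUnit _ h] at hHRH
    simp at hHRH
  have hRinv : Rhat * Rhat⁻¹ = 1 := Matrix.mul_nonsing_inv _ hRdet
  have hRinv' : Rhat⁻¹ * Rhat = 1 := Matrix.nonsing_inv_mul _ hRdet
  have hc₁ : (0:ℝ) ≤ α / t := div_nonneg hα0.le (Nat.cast_nonneg t)
  have hc₂ : (0:ℝ) ≤ 1 - α := by linarith
  have qnonneg : ∀ w : Fin d → ℝ, 0 ≤ w ⬝ᵥ (Rhat *ᵥ w) := by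
    intro w
    rw [quad w]
    have s1 : (0:ℝ) ≤ ∑ i, ((E *ᵥ w) i) ^ 2 := Finset.sum_nonneg fun _ _ => sq_nonneg _
    have s2 : (0:ℝ) ≤ ∑ l, (w l) ^ 2 := Finset.sum_nonneg fun _ _ => sq_nonneg _
    have := mul_nonneg hc₁ s1
    have := mul_nonneg hc₂ s2
    linarith
  have qzero : ∀ w : Fin d → ℝ, w ⬝ᵥ (Rhat *ᵥ w) = 0 → w = 0 := by
    intro w hw
    rw [quad w] at hw
    have s1 : (0:ℝ) ≤ ∑ i, ((E *ᵥ w) i) ^ 2 := Finset.sum_nonneg fun _ _ => sq_nonneg _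
    have s2 : (0:ℝ) ≤ ∑ l, (w l) ^ 2 := Finset.sum_nonneg fun _ _ => sq_nonneg _
    have m1 : (α / t) * ∑ i, ((E *ᵥ w) i) ^ 2 = 0 := by
      have := mul_nonneg hc₁ s1
      have := mul_nonneg hc₂ s2
      linarith
    have m2 : (1 - α) * ∑ l, (w l) ^ 2 = 0 := by
      have := mul_nonneg hc₁ s1
      have := mul_nonneg hc₂ s2
      linarith
    have hEw : E *ᵥ w = 0 := by
      rcases Nat.eq_zero_or_pos t with ht | ht
      · funext i
        exact absurd i.isLt (by omega)
      · have hc₁' : (0:ℝ) < α / t := div_pos hα0 (by exact_mod_cast ht)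
        have hsum : ∑ i, ((E *ᵥ w) i) ^ 2 = 0 :=
          (mul_eq_zero.mp m1).resolve_left (ne_of_gt hc₁')
        funext i
        have := (Finset.sum_eq_zero_iff_of_nonneg (fun i _ => sq_nonneg ((E *ᵥ w) i))).mp
          hsum i (Finset.mem_univ i)
        exact pow_eq_zero_iff two_ne_zero |>.mp this
    have hRw : Rhat *ᵥ w = (1 - α) • w := by
      have hz : (Eᵀ * E) *ᵥ w = 0 := by
        rw [← Matrix.mulVec_mulVec, hEw, Matrix.mulVec_zero]
      rw [hRhat, Matrix.add_mulVec, Matrix.smul_mulVec, hz, smul_zero,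
        zero_add, Matrix.smul_mulVec, Matrix.one_mulVec]
    rcases eq_or_ne (1 - α) 0 with hc | hc
    · have h0 : Rhat *ᵥ w = 0 := by rw [hRw, hc, zero_smul]
      calc w = (Rhat⁻¹ * Rhat) *ᵥ w := by rw [hRinv', Matrix.one_mulVec]
        _ = Rhat⁻¹ *ᵥ (Rhat *ᵥ w) := (Matrix.mulVec_mulVec _ _ _).symm
        _ = 0 := by rw [h0, Matrix.mulVec_zero]
    · have hsum : ∑ l, (w l) ^ 2 = 0 := (mul_eq_zero.mp m2).resolve_left hc
      funext l
      have := (Finset.sum_eq_zero_iff_of_nonneg (fun l _ => sq_nonneg (w l))).mp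
        hsum l (Finset.mem_univ l)
      exact pow_eq_zero_iff two_ne_zero |>.mp this
  -- constraint for b₀
  have hHC : Hᵀ * (Rhat⁻¹ * H * (Hᵀ * Rhat⁻¹ * H)⁻¹) = 1 := by
    rw [← Matrix.mul_assoc, ← Matrix.mul_assoc]
    exact Matrix.mul_nonsing_inv _ hHRH
  have constraint₀ : Hᵀ *ᵥ b₀ = Pi.single j 1 := by
    funext r
    have hcol : (Hᵀ *ᵥ b₀) r = (Hᵀ * (Rhat⁻¹ * H * (Hᵀ * Rhat⁻¹ * H)⁻¹)) r j := by
      rw [hb₀]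
      simp [Matrix.mulVec, Matrix.mul_apply, dotProduct]
    rw [hcol, hHC, Matrix.one_apply, Pi.single_apply]
  -- orthogonality
  have hRb₀ : Rhat *ᵥ b₀ = H *ᵥ (fun i => (Hᵀ * Rhat⁻¹ * H)⁻¹ i j) := by
    have hmul : Rhat * (Rhat⁻¹ * H * (Hᵀ * Rhat⁻¹ * H)⁻¹)
        = H * (Hᵀ * Rhat⁻¹ * H)⁻¹ := by
      rw [← Matrix.mul_assoc, ← Matrix.mul_assoc, hRinv, Matrix.one_mul]
    funext r
    rw [hb₀]
    have h1 : (Rhat *ᵥ fun i => (Rhat⁻¹ * H * (Hᵀ * Rhat⁻¹ * H)⁻¹) i j) r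
        = (Rhat * (Rhat⁻¹ * H * (Hᵀ * Rhat⁻¹ * H)⁻¹)) r j := by
      simp [Matrix.mulVec, Matrix.mul_apply, dotProduct]
    rw [h1, hmul]
    simp [Matrix.mulVec, Matrix.mul_apply, dotProduct]
  have orth : ∀ w : Fin d → ℝ, Hᵀ *ᵥ w = 0 → w ⬝ᵥ (Rhat *ᵥ b₀) = 0 := by
    intro w hw
    rw [hRb₀, Matrix.dotProduct_mulVec, ← Matrix.mulVec_transpose, hw,
      zero_dotProduct]
  -- symmetry
  have hsym : Rhatᵀ = Rhat := by
    rw [hRhat]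
    simp [Matrix.transpose_add, Matrix.transpose_smul, Matrix.transpose_mul,
      Matrix.transpose_transpose]
  have symdot : ∀ x y : Fin d → ℝ, x ⬝ᵥ (Rhat *ᵥ y) = y ⬝ᵥ (Rhat *ᵥ x) := by
    intro x y
    rw [Matrix.dotProduct_mulVec, ← Matrix.mulVec_transpose, hsym,
      dotProduct_comm]
  -- expansion
  have expand : ∀ w : Fin d → ℝ, (b₀ + w) ⬝ᵥ (Rhat *ᵥ (b₀ + w))
      = b₀ ⬝ᵥ (Rhat *ᵥ b₀) + 2 * (w ⬝ᵥ (Rhat *ᵥ b₀)) + w ⬝ᵥ (Rhat *ᵥ w) := by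
    intro w
    rw [Matrix.mulVec_add, dotProduct_add, add_dotProduct,
      add_dotProduct, symdot b₀ w]
    ring
  -- objective identity
  have obj : ∀ b : Fin d → ℝ, Hᵀ *ᵥ b = Pi.single j 1 →
      (1 / (t : ℝ)) * ∑ i, (X i j - (Z *ᵥ b) i) ^ 2 + ((1 - α) / α) * ∑ l, (b l) ^ 2
        = (1 / α) * (b ⬝ᵥ (Rhat *ᵥ b)) := by
    intro b hb
    have hZb : ∀ i, X i j - (Z *ᵥ b) i = -((E *ᵥ b) i) := by
      intro i
      have h1 : E *ᵥ b = Z *ᵥ b - (X * Hᵀ) *ᵥ b := by rw [hE, Matrix.sub_mulVec]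
      have h2 : (X * Hᵀ) *ᵥ b = X *ᵥ Pi.single j 1 := by
        rw [← Matrix.mulVec_mulVec, hb]
      have h3 : (X *ᵥ Pi.single j 1) i = X i j := by
        simp [Matrix.mulVec, dotProduct, Pi.single_apply]
      have := congrFun h1 i
      rw [h2] at this
      simp only [Pi.sub_apply] at this
      rw [h3] at this
      linarith
    have hs : ∑ i, (X i j - (Z *ᵥ b) i) ^ 2 = ∑ i, ((E *ᵥ b) i) ^ 2 := by
      apply Finset.sum_congr rfl
      intro i _
      rw [hZb i, neg_sq]
    rw [hs, quad b]
    field_simp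
  have min2 : ∀ b : Fin d → ℝ, Hᵀ *ᵥ b = Pi.single j 1 →
      b₀ ⬝ᵥ (Rhat *ᵥ b₀) ≤ b ⬝ᵥ (Rhat *ᵥ b) := by
    intro b hb
    have hw : Hᵀ *ᵥ (b - b₀) = 0 := by
      rw [Matrix.mulVec_sub, hb, constraint₀, sub_self]
    have hb' : b = b₀ + (b - b₀) := by abel
    rw [hb', expand (b - b₀), orth _ hw]
    have := qnonneg (b - b₀)
    linarith
  refine ⟨constraint₀, ?_, ?_⟩
  · intro b hb
    rw [obj b hb, obj b₀ constraint₀]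
    have := min2 b hb
    have hpos : (0:ℝ) < 1 / α := by positivity
    nlinarith
  · intro b hb hmin
    have h1 := hmin b₀ constraint₀
    rw [obj b hb, obj b₀ constraint₀] at h1
    have hQle : b ⬝ᵥ (Rhat *ᵥ b) ≤ b₀ ⬝ᵥ (Rhat *ᵥ b₀) := by
      have hpos : (0:ℝ) < 1 / α := by positivity
      nlinarith
    have hQeq : b ⬝ᵥ (Rhat *ᵥ b) = b₀ ⬝ᵥ (Rhat *ᵥ b₀) :=
      le_antisymm hQle (min2 b hb)
    have hw : Hᵀ *ᵥ (b - b₀) = 0 := by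
      rw [Matrix.mulVec_sub, hb, constraint₀, sub_self]
    have hb' : b = b₀ + (b - b₀) := by abel
    have hexp := expand (b - b₀)
    rw [← hb', orth _ hw, hQeq] at hexp
    have hq0 : (b - b₀) ⬝ᵥ (Rhat *ᵥ (b - b₀)) = 0 := by linarith
    have := qzero _ hq0
    have : b - b₀ = 0 := this
    funext i
    have := congrFun this i
    simp only [Pi.sub_apply, Pi.zero_apply] at this
    linarith
end
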